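/- arXiv:1503.00566 — 5 statements merged into one kernel-verified Lean document; each statement's English description precedes it below -/
import Mathlib

section
/- Let a > b ≥ 1 be coprime positive integers and set c = a/b, so c > 1 is rational. Let γ_c : ℝ → ℝ² be the hypocycloid parametrization γ_c(φ) = ((c-1)·cos φ + cos((c-1)φ), (c-1)·sin φ − sin((c-1)φ)). Then the total arclength of the c-hypocycloid is ϖ_c = ∫₀^{2πb} ‖γ_c'(ψ)‖ dψ = 8b(c−1). -/
open Real

/-!
The speed of the hypocycloid is `‖γ_c'(φ)‖ = 2 (c - 1) |sin (c φ / 2)|`, by the half-angle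
formula applied to `|γ_c'|² = 2 (c - 1)² (1 - cos (c φ))`. It has period `2π / c`, each period
tracing one arch of length `8 (c - 1) / c`, and `[0, 2πb]` consists of `a = c b` such periods.
-/

theorem sq_sin_add_sin_add_sq_cos_sub_cos (x y : ℝ) :
    (sin x + sin y) ^ 2 + (cos x - cos y) ^ 2 = 4 * sin ((x + y) / 2) ^ 2 := by
  rw [sin_sq_eq_half_sub, mul_div_cancel₀ _ two_ne_zero, cos_add]
  linear_combination sin_sq_add_cos_sq x + sin_sq_add_cos_sq y

theorem integral_abs_sin_nat_mul_pi (n : ℕ) : ∫ x in 0..n * π, |sin x| = 2 * n := by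
  have hperiodic : Function.Periodic (fun x => |sin x|) π := fun x => by simp [sin_add_pi]
  have hone : ∫ x in 0..π, |sin x| = 2 := by
    have hsin_nonneg : Set.EqOn (fun x => |sin x|) sin (Set.uIcc 0 π) := fun x hx => by
      rw [Set.uIcc_of_le pi_pos.le] at hx
      exact abs_of_nonneg (sin_nonneg_of_nonneg_of_le_pi hx.1 hx.2)
    rw [intervalIntegral.integral_congr hsin_nonneg]
    norm_num [integral_sin]
  have := hperiodic.intervalIntegral_add_zsmul_eq n 0
    fun _ _ => continuous_sin.abs.intervalIntegrable _ _
  simp only [zero_add, zsmul_eq_mul, Int.cast_natCast] at this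
  rw [this, hone, mul_comm]

theorem integral_abs_sin_mul_of_ne_zero (n : ℕ) {ω : ℝ} (hω : ω ≠ 0) :
    ∫ x in 0..n * π / ω, |sin (ω * x)| = 2 * n / ω := by
  rw [intervalIntegral.integral_comp_mul_left (fun x => |sin x|) hω, mul_zero,
    mul_div_cancel₀ _ hω, integral_abs_sin_nat_mul_pi, smul_eq_mul, inv_mul_eq_div]

noncomputable def hypocycloid (c φ : ℝ) : EuclideanSpace ℝ (Fin 2) :=
  !₂[(c - 1) * cos φ + cos ((c - 1) * φ), (c - 1) * sin φ - sin ((c - 1) * φ)]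

theorem hasDerivAt_hypocycloid (c φ : ℝ) :
    HasDerivAt (hypocycloid c)
      !₂[-((c - 1) * (sin φ + sin ((c - 1) * φ))), (c - 1) * (cos φ - cos ((c - 1) * φ))] φ := by
  have hscale : HasDerivAt (fun x => (c - 1) * x) (c - 1) φ := by
    simpa using (hasDerivAt_id φ).const_mul (c - 1)
  have hcomponents : HasDerivAt
      (fun φ => ![(c - 1) * cos φ + cos ((c - 1) * φ), (c - 1) * sin φ - sin ((c - 1) * φ)])
      ![-((c - 1) * (sin φ + sin ((c - 1) * φ))), (c - 1) * (cos φ - cos ((c - 1) * φ))] φ := by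
    rw [hasDerivAt_pi]
    intro i
    fin_cases i
    · exact (((hasDerivAt_cos φ).const_mul (c - 1)).add
        ((hasDerivAt_cos _).comp φ hscale)).congr_deriv (by simp; ring)
    · exact (((hasDerivAt_sin φ).const_mul (c - 1)).sub
        ((hasDerivAt_sin _).comp φ hscale)).congr_deriv (by simp; ring)
  exact (PiLp.hasFDerivAt_toLp 2 _).comp_hasDerivAt φ hcomponents

theorem norm_deriv_hypocycloid (c φ : ℝ) :
    ‖deriv (hypocycloid c) φ‖ = 2 * |c - 1| * |sin (c / 2 * φ)| := by
  rw [(hasDerivAt_hypocycloid c φ).deriv, EuclideanSpace.norm_eq, Fin.sum_univ_two]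
  simp only [Matrix.cons_val_zero, Matrix.cons_val_one, Real.norm_eq_abs, sq_abs, neg_sq, mul_pow]
  rw [← mul_add, sq_sin_add_sin_add_sq_cos_sub_cos, show (φ + (c - 1) * φ) / 2 = c / 2 * φ by ring,
    show (c - 1) ^ 2 * (4 * sin (c / 2 * φ) ^ 2) = (2 * (c - 1) * sin (c / 2 * φ)) ^ 2 by ring,
    sqrt_sq_eq_abs, abs_mul, abs_mul, abs_two]

theorem integral_norm_deriv_hypocycloid (n : ℕ) {c : ℝ} (hc : 1 ≤ c) :
    ∫ φ in 0..2 * n * π / c, ‖deriv (hypocycloid c) φ‖ = 8 * n * (c - 1) / c := by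
  have hc0 : c / 2 ≠ 0 := by positivity
  simp_rw [norm_deriv_hypocycloid]
  rw [intervalIntegral.integral_const_mul, show 2 * n * π / c = n * π / (c / 2) by ring,
    integral_abs_sin_mul_of_ne_zero n hc0, abs_of_nonneg (sub_nonneg.2 hc)]
  field_simp
  ring

theorem hypocycloid_total_arclength_general (a b : ℕ) (hb : 1 ≤ b) (hab : b < a)
    (c : ℝ) (hc : c = (a : ℝ) / (b : ℝ))
    (γ : ℝ → EuclideanSpace ℝ (Fin 2))
    (hγ : ∀ φ : ℝ, γ φ =
      ![(c - 1) * Real.cos φ + Real.cos ((c - 1) * φ),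
        (c - 1) * Real.sin φ - Real.sin ((c - 1) * φ)]) :
    (∫ ψ in (0 : ℝ)..(2 * π * b), ‖deriv γ ψ‖) = 8 * b * (c - 1) := by
  have hγ_eq : γ = hypocycloid c := funext fun φ => WithLp.ofLp_injective 2 (hγ φ)
  have hb0 : (b : ℝ) ≠ 0 := by positivity
  have hcb : c * b = a := by rw [hc, div_mul_cancel₀ _ hb0]
  have hc1 : 1 ≤ c := by
    rw [hc, one_le_div₀ (by positivity)]
    exact_mod_cast hab.le
  have hc0 : c ≠ 0 := by positivity
  have hlength : 2 * π * b = 2 * a * π / c := by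
    rw [← hcb]; field_simp
  rw [hγ_eq, hlength, integral_norm_deriv_hypocycloid a hc1, ← hcb]
  field_simp

/-- For `c = a/b > 1` rational in lowest terms, the total arclength of the
`c`-hypocycloid is `∫₀^{2πb} ‖γ_c'‖ = 8b(c-1)`. -/
theorem hypocycloid_total_arclength (a b : ℕ) (hb : 1 ≤ b) (hab : b < a)
    (hcop : Nat.Coprime a b) (c : ℝ) (hc : c = (a : ℝ) / (b : ℝ))
    (γ : ℝ → EuclideanSpace ℝ (Fin 2))
    (hγ : ∀ φ : ℝ, γ φ =
      ![(c - 1) * Real.cos φ + Real.cos ((c - 1) * φ),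
        (c - 1) * Real.sin φ - Real.sin ((c - 1) * φ)]) :
    (∫ ψ in (0 : ℝ)..(2 * π * b), ‖deriv γ ψ‖) = 8 * b * (c - 1) :=
  hypocycloid_total_arclength_general a b hb hab c hc γ hγ
end

section
/- Let γ : ℝ → ℝ² be the tricuspoid parametrization γ(φ) = (2cos φ + cos 2φ, 2sin φ − sin 2φ). Let n ≥ 3 be an integer and suppose φ ∈ [0, 2π/3] satisfies ∫₀^φ ‖γ'(ψ)‖ dψ = 16/n (so γ(φ) is the first n-division point of the tricuspoid). Then the squared polar radius satisfies ‖γ(φ)‖² = (9n² − 96n + 288)/n². -/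
/-!
On the first cusp arc `0 ≤ ψ ≤ 2π/3` the speed of the tricuspoid is `‖γ'(ψ)‖ = 4 sin (3ψ/2)`,
so the arclength from the cusp `γ 0` is `8/3 (1 - cos (3φ/2))`, and the condition
`arclength = 16/n` pins down `cos (3φ/2) = 1 - 6/n`. The polar radius satisfies
`‖γ φ‖² = 5 + 4 cos 3φ = 1 + 8 cos² (3φ/2)`, which gives the formula.
-/

open Real Set intervalIntegral

noncomputable def tricuspoid (φ : ℝ) : EuclideanSpace ℝ (Fin 2) :=
  !₂[2 * cos φ + cos (2 * φ), 2 * sin φ - sin (2 * φ)]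

theorem norm_tricuspoid_sq (φ : ℝ) : ‖tricuspoid φ‖ ^ 2 = 5 + 4 * cos (3 * φ) := by
  rw [EuclideanSpace.real_norm_sq_eq, Fin.sum_univ_two, show 3 * φ = 2 * φ + φ by ring, cos_add]
  simp only [tricuspoid, PiLp.toLp_apply, Matrix.cons_val_zero, Matrix.cons_val_one]
  linear_combination 4 * sin_sq_add_cos_sq φ + sin_sq_add_cos_sq (2 * φ)

theorem hasDerivAt_tricuspoid (ψ : ℝ) :
    HasDerivAt tricuspoid
      !₂[-2 * sin ψ - 2 * sin (2 * ψ), 2 * cos ψ - 2 * cos (2 * ψ)] ψ := by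
  have hx : HasDerivAt (fun x ↦ 2 * cos x + cos (2 * x))
      (-2 * sin ψ - 2 * sin (2 * ψ)) ψ :=
    (((hasDerivAt_cos ψ).const_mul 2).add
      ((hasDerivAt_cos (2 * ψ)).comp ψ ((hasDerivAt_id ψ).const_mul 2))).congr_deriv (by ring)
  have hy : HasDerivAt (fun x ↦ 2 * sin x - sin (2 * x))
      (2 * cos ψ - 2 * cos (2 * ψ)) ψ :=
    (((hasDerivAt_sin ψ).const_mul 2).sub
      ((hasDerivAt_sin (2 * ψ)).comp ψ ((hasDerivAt_id ψ).const_mul 2))).congr_deriv (by ring)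
  have hcoords : HasDerivAt (fun x ↦ ![2 * cos x + cos (2 * x), 2 * sin x - sin (2 * x)])
      ![-2 * sin ψ - 2 * sin (2 * ψ), 2 * cos ψ - 2 * cos (2 * ψ)] ψ :=
    hasDerivAt_pi.2 (Fin.forall_fin_two.2 ⟨hx, hy⟩)
  exact (PiLp.hasFDerivAt_toLp 2 _).comp_hasDerivAt ψ hcoords

theorem norm_deriv_tricuspoid (ψ : ℝ) : ‖deriv tricuspoid ψ‖ = 4 * |sin (3 / 2 * ψ)| := by
  have hcos : cos (2 * ψ + ψ) = 1 - 2 * sin (3 / 2 * ψ) ^ 2 := by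
    rw [show 2 * ψ + ψ = 2 * (3 / 2 * ψ) by ring, cos_two_mul, cos_sq']
    ring
  have hsq : ‖deriv tricuspoid ψ‖ ^ 2 = (4 * |sin (3 / 2 * ψ)|) ^ 2 := by
    rw [(hasDerivAt_tricuspoid ψ).deriv, EuclideanSpace.real_norm_sq_eq, Fin.sum_univ_two,
      mul_pow, sq_abs]
    simp only [Matrix.cons_val_zero, Matrix.cons_val_one]
    rw [cos_add] at hcos
    linear_combination 4 * sin_sq_add_cos_sq ψ + 4 * sin_sq_add_cos_sq (2 * ψ) - 8 * hcos
  exact (sq_eq_sq₀ (norm_nonneg _) (by positivity)).1 hsq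

theorem integral_norm_deriv_tricuspoid {φ : ℝ} (hφ0 : 0 ≤ φ) (hφ1 : φ ≤ 2 * π / 3) :
    ∫ ψ in 0..φ, ‖deriv tricuspoid ψ‖ = 8 / 3 * (1 - cos (3 / 2 * φ)) := by
  have hspeed : EqOn (fun ψ ↦ ‖deriv tricuspoid ψ‖) (fun ψ ↦ 4 * sin (3 / 2 * ψ)) (uIcc 0 φ) := by
    intro ψ hψ
    rw [uIcc_of_le hφ0] at hψ
    simp only [norm_deriv_tricuspoid]
    rw [abs_of_nonneg
      (sin_nonneg_of_nonneg_of_le_pi (by linarith [hψ.1]) (by linarith [hψ.2]))]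
  rw [integral_congr hspeed, integral_const_mul, integral_comp_mul_left (fun x ↦ sin x),
    integral_sin]
  · simp only [mul_zero, cos_zero, smul_eq_mul]
    ring
  · norm_num

/-- The squared polar radius of the first `n`-division point of the tricuspoid
is `(9n² − 96n + 288)/n²`. -/
theorem tricuspoid_division_point_polar_radius_sq
    (γ : ℝ → EuclideanSpace ℝ (Fin 2))
    (hγ : ∀ φ : ℝ, γ φ =
      ![2 * Real.cos φ + Real.cos (2 * φ),
        2 * Real.sin φ - Real.sin (2 * φ)])
    (n : ℕ) (hn : 3 ≤ n)
    (φ : ℝ) (hφ0 : 0 ≤ φ) (hφ1 : φ ≤ 2 * π / 3)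
    (hs : (∫ ψ in (0 : ℝ)..φ, ‖deriv γ ψ‖) = 16 / (n : ℝ)) :
    ‖γ φ‖ ^ 2 = (9 * (n : ℝ) ^ 2 - 96 * (n : ℝ) + 288) / (n : ℝ) ^ 2 := by
  obtain rfl : γ = tricuspoid := funext fun ψ ↦ WithLp.ofLp_injective 2 (hγ ψ)
  have hn0 : (n : ℝ) ≠ 0 := by exact_mod_cast (by omega : n ≠ 0)
  rw [integral_norm_deriv_tricuspoid hφ0 hφ1] at hs
  have hcos : cos (3 / 2 * φ) = 1 - 6 / n := by
    field_simp at hs ⊢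
    linarith
  rw [norm_tricuspoid_sq, show 3 * φ = 2 * (3 / 2 * φ) by ring, cos_two_mul, hcos]
  field_simp
  ring
end

section
/- Let γ : ℝ → ℝ² be the tricuspoid parametrization γ(φ) = (2cos φ + cos 2φ, 2sin φ − sin 2φ). Let n ≥ 3 be an integer and suppose φ ∈ [0, 2π/3] satisfies ∫₀^φ ‖γ'(ψ)‖ dψ = 16/n (so γ(φ) is the first n-division point of the tricuspoid). Then the x-coordinate x = 2cos φ + cos 2φ is a root of the cubic polynomial f_n(X) = 4n⁴·X³ − (27n⁴ − 288n³ + 864n²)·X − (27n⁴ − 432n³ + 2448n² − 6912n + 10368). -/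
open Real Polynomial

/-!
The speed of the tricuspoid is `‖γ'(ψ)‖ = 4 |sin (3ψ/2)|`, so along the first cusp arc the
arclength is `8/3 (1 - cos (3φ/2))`, and the division condition says `cos (3φ/2) = 1 - 6/n`.
The abscissa `x = 2 cos φ + cos 2φ` and `t = cos 3φ = 2 cos² (3φ/2) - 1` are both polynomials
in `cos φ`; eliminating `cos φ` gives the cubic relation `4x³ - (15 + 12t)x - (2t² + 14t + 11) = 0`,
which becomes `f_n(x) = 0` after substituting `t = 2 (1 - 6/n)² - 1` and clearing denominators.
-/

theorem HasDerivAt.toLp {𝕜 ι : Type*} {E : ι → Type*} [NontriviallyNormedField 𝕜] [Fintype ι]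
    [∀ i, NormedAddCommGroup (E i)] [∀ i, NormedSpace 𝕜 (E i)] (p : ENNReal) [Fact (1 ≤ p)]
    {f : 𝕜 → ∀ i, E i} {f' : ∀ i, E i} {x : 𝕜} (h : HasDerivAt f f' x) :
    HasDerivAt (fun t => WithLp.toLp p (f t)) (WithLp.toLp p f') x :=
  (PiLp.hasFDerivAt_toLp p (f x)).comp_hasDerivAt x h

namespace Tricuspoid

noncomputable def param (φ : ℝ) : EuclideanSpace ℝ (Fin 2) :=
  !₂[2 * cos φ + cos (2 * φ), 2 * sin φ - sin (2 * φ)]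

theorem hasDerivAt_param (ψ : ℝ) :
    HasDerivAt param !₂[-2 * sin ψ - 2 * sin (2 * ψ), 2 * cos ψ - 2 * cos (2 * ψ)] ψ := by
  have hx : HasDerivAt (fun t => 2 * cos t + cos (2 * t)) (-2 * sin ψ - 2 * sin (2 * ψ)) ψ :=
    (((hasDerivAt_cos ψ).const_mul 2).add ((hasDerivAt_const_mul 2).cos)).congr_deriv
      (by ring)
  have hy : HasDerivAt (fun t => 2 * sin t - sin (2 * t)) (2 * cos ψ - 2 * cos (2 * ψ)) ψ :=
    (((hasDerivAt_sin ψ).const_mul 2).sub ((hasDerivAt_const_mul 2).sin)).congr_deriv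
      (by ring)
  refine HasDerivAt.toLp 2
    (f := fun t => ![2 * cos t + cos (2 * t), 2 * sin t - sin (2 * t)])
    (hasDerivAt_pi.2 fun i => ?_)
  fin_cases i
  · simpa using hx
  · simpa using hy

theorem norm_deriv_param (ψ : ℝ) : ‖deriv param ψ‖ = 4 * |sin (3 * ψ / 2)| := by
  have hcos3 : cos (3 * ψ) = cos ψ * cos (2 * ψ) - sin ψ * sin (2 * ψ) := by
    rw [← cos_add]; ring_nf
  have hhalf : cos (3 * ψ) = 1 - 2 * sin (3 * ψ / 2) ^ 2 := by
    rw [← cos_two_mul_eq_one_sub]; ring_nf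
  have hsq : (-2 * sin ψ - 2 * sin (2 * ψ)) ^ 2 + (2 * cos ψ - 2 * cos (2 * ψ)) ^ 2
      = (4 * sin (3 * ψ / 2)) ^ 2 := by
    linear_combination 4 * sin_sq_add_cos_sq ψ + 4 * sin_sq_add_cos_sq (2 * ψ) + 8 * hcos3
      - 8 * hhalf
  rw [(hasDerivAt_param ψ).deriv, EuclideanSpace.norm_eq, Fin.sum_univ_two]
  simp only [Real.norm_eq_abs, sq_abs, Matrix.cons_val_zero, Matrix.cons_val_one]
  rw [hsq, sqrt_sq_eq_abs, abs_mul, abs_of_pos four_pos]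

theorem integral_norm_deriv_param {φ : ℝ} (hφ0 : 0 ≤ φ) (hφ1 : φ ≤ 2 * π / 3) :
    ∫ ψ in (0 : ℝ)..φ, ‖deriv param ψ‖ = 8 / 3 * (1 - cos (3 * φ / 2)) := by
  have hspeed : Set.EqOn (fun ψ => ‖deriv param ψ‖) (fun ψ => 4 * sin (3 * ψ / 2))
      (Set.uIcc 0 φ) := by
    intro ψ hψ
    rw [Set.uIcc_of_le hφ0] at hψ
    dsimp only
    rw [norm_deriv_param, abs_of_nonneg (sin_nonneg_of_nonneg_of_le_pi (by linarith [hψ.1])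
      (by linarith [hψ.2]))]
  have hprim (ψ : ℝ) : HasDerivAt (fun t => -(8 / 3) * cos (3 * t / 2)) (4 * sin (3 * ψ / 2)) ψ :=
    ((((hasDerivAt_id ψ).const_mul 3).div_const 2).cos.const_mul _).congr_deriv
      (by simp only [id_eq]; ring)
  rw [intervalIntegral.integral_congr hspeed,
    intervalIntegral.integral_eq_sub_of_hasDerivAt (fun ψ _ => hprim ψ)
      (by apply Continuous.intervalIntegrable; fun_prop)]
  simp only [mul_zero, zero_div, cos_zero]
  ring

theorem abscissa_cubic_relation (φ : ℝ) :
    4 * (2 * cos φ + cos (2 * φ)) ^ 3 - (15 + 12 * cos (3 * φ)) * (2 * cos φ + cos (2 * φ))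
      - (2 * cos (3 * φ) ^ 2 + 14 * cos (3 * φ) + 11) = 0 := by
  rw [cos_two_mul, cos_three_mul]
  ring

theorem division_cubic_eq {n x t : ℝ} (hn : n ≠ 0) (ht : t = 2 * (1 - 6 / n) ^ 2 - 1) :
    4 * n ^ 4 * x ^ 3 - (27 * n ^ 4 - 288 * n ^ 3 + 864 * n ^ 2) * x
      - (27 * n ^ 4 - 432 * n ^ 3 + 2448 * n ^ 2 - 6912 * n + 10368)
      = n ^ 4 * (4 * x ^ 3 - (15 + 12 * t) * x - (2 * t ^ 2 + 14 * t + 11)) := by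
  subst ht
  field_simp
  ring

end Tricuspoid

/-- The `x`-coordinate of the first `n`-division point of the tricuspoid is a
root of the cubic `f_n(X) = 4n⁴X³ − (27n⁴ − 288n³ + 864n²)X −
(27n⁴ − 432n³ + 2448n² − 6912n + 10368)`. -/
theorem tricuspoid_division_point_x_is_root
    (γ : ℝ → EuclideanSpace ℝ (Fin 2))
    (hγ : ∀ φ : ℝ, γ φ =
      ![2 * Real.cos φ + Real.cos (2 * φ),
        2 * Real.sin φ - Real.sin (2 * φ)])
    (n : ℕ) (hn : 3 ≤ n)
    (φ : ℝ) (hφ0 : 0 ≤ φ) (hφ1 : φ ≤ 2 * π / 3)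
    (hs : (∫ ψ in (0 : ℝ)..φ, ‖deriv γ ψ‖) = 16 / (n : ℝ))
    (x : ℝ) (hx : x = 2 * Real.cos φ + Real.cos (2 * φ))
    (f : Polynomial ℚ)
    (hf : f = C (4 * (n : ℚ) ^ 4) * X ^ 3
      - C (27 * (n : ℚ) ^ 4 - 288 * (n : ℚ) ^ 3 + 864 * (n : ℚ) ^ 2) * X
      - C (27 * (n : ℚ) ^ 4 - 432 * (n : ℚ) ^ 3 + 2448 * (n : ℚ) ^ 2
            - 6912 * (n : ℚ) + 10368)) :
    Polynomial.aeval x f = 0 := by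
  have hγ_eq : γ = Tricuspoid.param := funext fun ψ => WithLp.ofLp_injective 2 (hγ ψ)
  have hn0 : (n : ℝ) ≠ 0 := Nat.cast_ne_zero.2 (by omega)
  have hcos : cos (3 * φ / 2) = 1 - 6 / n := by
    rw [hγ_eq, Tricuspoid.integral_norm_deriv_param hφ0 hφ1] at hs
    field_simp at hs ⊢
    linarith
  have hcos3 : cos (3 * φ) = 2 * (1 - 6 / n) ^ 2 - 1 := by
    rw [← hcos, ← cos_two_mul]; ring_nf
  subst hf hx
  simp only [map_sub, map_mul, map_pow, aeval_X, aeval_C, eq_ratCast]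
  push_cast
  rw [Tricuspoid.division_cubic_eq hn0 hcos3, Tricuspoid.abscissa_cubic_relation, mul_zero]
end

section
/- Let n > 2 be an integer with gcd(n, 3) = 1. Then the cubic polynomial f_n(X) = 4n⁴·X³ − (27n⁴ − 288n³ + 864n²)·X − (27n⁴ − 432n³ + 2448n² − 6912n + 10368) is irreducible over ℚ. -/
open Polynomial

/-- For `n > 2` with `gcd(n,3) = 1`, the cubic
`f_n(X) = 4n⁴X³ − (27n⁴ − 288n³ + 864n²)X −
(27n⁴ − 432n³ + 2448n² − 6912n + 10368)` is irreducible over `ℚ`. -/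
theorem f_n_irreducible (n : ℕ) (hn : 2 < n) (h3 : Nat.gcd n 3 = 1) :
    Irreducible
      (C (4 * (n : ℚ) ^ 4) * X ^ 3
        - C (27 * (n : ℚ) ^ 4 - 288 * (n : ℚ) ^ 3 + 864 * (n : ℚ) ^ 2) * X
        - C (27 * (n : ℚ) ^ 4 - 432 * (n : ℚ) ^ 3 + 2448 * (n : ℚ) ^ 2
              - 6912 * (n : ℚ) + 10368)) := by
  have hnQ : (n : ℚ) ≠ 0 := by positivity
  have hlc : (4 * (n : ℚ) ^ 4) ≠ 0 := by positivity
  set a : ℚ := 27 * (n : ℚ) ^ 4 - 288 * (n : ℚ) ^ 3 + 864 * (n : ℚ) ^ 2 with ha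
  set b : ℚ := 27 * (n : ℚ) ^ 4 - 432 * (n : ℚ) ^ 3 + 2448 * (n : ℚ) ^ 2
              - 6912 * (n : ℚ) + 10368 with hb
  set p : ℚ[X] := C (4 * (n : ℚ) ^ 4) * X ^ 3 - C a * X - C b with hp
  have hdeg : p.natDegree = 3 := by
    rw [hp]
    compute_degree!
    omega
  rw [irreducible_iff_roots_eq_zero_of_degree_le_three (by omega) (by omega)]
  rw [Multiset.eq_zero_iff_forall_notMem]
  intro x hx
  have hp0 : p ≠ 0 := fun h => by simp [h] at hdeg
  rw [mem_roots hp0] at hx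
  have hev : 4 * (n : ℚ) ^ 4 * x ^ 3 - a * x - b = 0 := by
    simpa [hp, IsRoot] using hx
  set y : ℚ := 2 * (n : ℚ) ^ 2 * x with hy
  set A : ℤ := 27 * (n : ℤ) ^ 4 - 288 * (n : ℤ) ^ 3 + 864 * (n : ℤ) ^ 2 with hA
  set Cc : ℤ := 2 * (n : ℤ) ^ 2 *
    (27 * (n : ℤ) ^ 4 - 432 * (n : ℤ) ^ 3 + 2448 * (n : ℤ) ^ 2 - 6912 * (n : ℤ) + 10368) with hCc
  have hyev : y ^ 3 - ((A : ℚ) * y + (Cc : ℚ)) = 0 := by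
    rw [hy, hA, hCc]
    push_cast
    have h8 : (2 * (n : ℚ) ^ 2 * x) ^ 3 = 2 * (n:ℚ)^2 * (4 * (n : ℚ) ^ 4 * x ^ 3) := by ring
    rw [h8]
    have h4 : 4 * (n : ℚ) ^ 4 * x ^ 3 = a * x + b := by linarith [hev]
    rw [h4, ha, hb]
    ring
  set g : ℤ[X] := X ^ 3 - (C A * X + C Cc) with hg
  have hgmonic : g.Monic := by
    rw [hg]
    apply monic_X_pow_sub
    apply lt_of_le_of_lt (degree_add_le _ _)
    apply max_lt
    · exact lt_of_le_of_lt (degree_C_mul_X_le _) (by norm_num)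
    · exact lt_of_le_of_lt (degree_C_le) (by norm_num)
  have hroot : aeval y g = 0 := by
    rw [hg]
    simpa using hyev
  obtain ⟨m, hm⟩ := isInteger_of_is_root_of_monic hgmonic hroot
  -- transfer equation to ℤ
  have hmQ : (m : ℚ) = y := by simpa using hm
  have hZ : m ^ 3 = A * m + Cc := by
    have : (m : ℚ) ^ 3 - ((A : ℚ) * m + (Cc : ℚ)) = 0 := by rw [hmQ]; exact hyev
    have h2 : ((m ^ 3 - (A * m + Cc) : ℤ) : ℚ) = 0 := by push_cast; linarith [this]
    have := Int.cast_injective (α := ℚ) (h2.trans (Int.cast_zero).symm)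
    omega
  -- number theory: contradiction mod 27
  have hn3 : ¬ (3 : ℤ) ∣ (n : ℤ) := by
    intro h
    have h' : (3 : ℕ) ∣ n := by exact_mod_cast h
    have := Nat.dvd_gcd h' (dvd_refl 3)
    rw [h3] at this
    omega
  have hprime3 : Prime (3 : ℤ) := Int.prime_three
  have h3m : (3 : ℤ) ∣ m := by
    refine hprime3.dvd_of_dvd_pow (n := 3) ?_
    rw [hZ]
    refine dvd_add (Dvd.dvd.mul_right ⟨9 * (n:ℤ)^4 - 96 * (n:ℤ)^3 + 288 * (n:ℤ)^2, by rw [hA]; ring⟩ m) ?_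
    exact ⟨2 * (n:ℤ)^2 * (9 * (n:ℤ)^4 - 144 * (n:ℤ)^3 + 816 * (n:ℤ)^2 - 2304 * (n:ℤ) + 3456), by rw [hCc]; ring⟩
  obtain ⟨k, hk⟩ := h3m
  have h9 : 9 * (n:ℤ)^4 = 27 * (k^3 - (3*(n:ℤ)^4 - 32*(n:ℤ)^3 + 96*(n:ℤ)^2)*k
      - (2*(n:ℤ)^6 - 32*(n:ℤ)^5 + 181*(n:ℤ)^4 - 512*(n:ℤ)^3 + 768*(n:ℤ)^2)) := by
    rw [hk, hA, hCc] at hZ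
    linear_combination -hZ
  have h3n4 : (3 : ℤ) ∣ (n:ℤ)^4 := by
    refine ⟨k^3 - (3*(n:ℤ)^4 - 32*(n:ℤ)^3 + 96*(n:ℤ)^2)*k
      - (2*(n:ℤ)^6 - 32*(n:ℤ)^5 + 181*(n:ℤ)^4 - 512*(n:ℤ)^3 + 768*(n:ℤ)^2), by linarith⟩
  exact hn3 (hprime3.dvd_of_dvd_pow h3n4)
end

section
/- Let n > 2 be an integer with gcd(n, 3) = 1, let γ : ℝ → ℝ² be the tricuspoid parametrization γ(φ) = (2cos φ + cos 2φ, 2sin φ − sin 2φ), and let φ ∈ [0, 2π/3] satisfy ∫₀^φ ‖γ'(ψ)‖ dψ = 16/n. Then the x-coordinate x = 2cos φ + cos 2φ of the first n-division point of the tricuspoid is algebraic of degree 3 over ℚ; in particular, the degree [ℚ(x) : ℚ] = 3 is not a power of 2, so x is not a constructible number. -/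
/-!
Along the first cusp arc the speed of the deltoid is `‖γ'(ψ)‖ = 4 sin (3ψ/2)`, so the arclength
condition says `cos (3φ/2) = 1 - 6/n`. With `c = cos φ`, the triplication formula turns this into
a cubic relation for `c`; the shifted and scaled value `z = n (2c + 1)` is a root of the monic
integer cubic `z³ - 3n z² + 48n(n - 3)`, which is Eisenstein at `3` as soon as `3 ∤ n`. Hence
`[ℚ(z) : ℚ] = 3`, and `x = z² / (2n²) - 3/2` is an irrational element of the cubic field `ℚ(z)`,
so it has degree `3` too. Constructible numbers lie in towers of quadratic extensions, so their
degrees are powers of `2`.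
-/

open Real

/-- A real number is constructible with straightedge and compass iff it can be
obtained from the rationals by field operations and taking square roots. -/
inductive IsConstructible : ℝ → Prop
  | rat (q : ℚ) : IsConstructible (q : ℝ)
  | add {a b : ℝ} : IsConstructible a → IsConstructible b → IsConstructible (a + b)
  | neg {a : ℝ} : IsConstructible a → IsConstructible (-a)
  | mul {a b : ℝ} : IsConstructible a → IsConstructible b → IsConstructible (a * b)
  | inv {a : ℝ} : IsConstructible a → IsConstructible a⁻¹
  | sqrt {a : ℝ} : 0 ≤ a → IsConstructible a → IsConstructible (Real.sqrt a)

open Polynomial IntermediateField Module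

section

variable {F E : Type*} [Field F] [Field E] [Algebra F E]

theorem IntermediateField.exists_finrank_two_pow_of_sq_mem {K : IntermediateField F E} {k : ℕ}
    (hK : finrank F K = 2 ^ k) {s : E} (hs : s ^ 2 ∈ K) :
    ∃ K' : IntermediateField F E, K ≤ K' ∧ s ∈ K' ∧ ∃ k', finrank F K' = 2 ^ k' := by
  let L : IntermediateField K E := K⟮s⟯
  have hKL : K ≤ L.restrictScalars F := fun x hx ↦ L.algebraMap_mem ⟨x, hx⟩
  have hs_root : aeval s (X ^ 2 - C (⟨s ^ 2, hs⟩ : K)) = 0 := by simp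
  have hs_int : IsIntegral K s :=
    ⟨_, monic_X_pow_sub_C _ two_ne_zero, by rwa [aeval_def] at hs_root⟩
  have hL_le : finrank K L ≤ 2 := by
    rw [adjoin.finrank hs_int]
    exact natDegree_le_of_degree_le ((minpoly.degree_le_of_ne_zero K s
      (X_pow_sub_C_ne_zero two_pos _) hs_root).trans (degree_X_pow_sub_C two_pos _).le)
  have hL_pos : 0 < finrank K L := by
    have := adjoin.finiteDimensional hs_int
    exact finrank_pos
  have hrank : finrank F (L.restrictScalars F) = 2 ^ k * finrank K L := by
    rw [← finrank_bot_mul_relfinrank hKL, relfinrank_eq_finrank_of_le hKL, hK]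
    rfl
  refine ⟨L.restrictScalars F, hKL, mem_adjoin_simple_self K s, ?_⟩
  obtain h | h : finrank K L = 1 ∨ finrank K L = 2 := by omega
  · exact ⟨k, by rw [hrank, h, mul_one]⟩
  · exact ⟨k + 1, by rw [hrank, h, pow_succ]⟩

theorem natDegree_minpoly_aeval_eq_of_prime {α : E} (hα : IsIntegral F α)
    (hp : (minpoly F α).natDegree.Prime) {f : F[X]} (hf₀ : 0 < f.natDegree)
    (hf : f.natDegree < (minpoly F α).natDegree) :
    (minpoly F (aeval α f)).natDegree = (minpoly F α).natDegree := by
  have : FiniteDimensional F F⟮α⟯ := adjoin.finiteDimensional hα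
  let β : F⟮α⟯ := ⟨aeval α f, algebra_adjoin_le_adjoin F _ (aeval_mem_adjoin_singleton F α)⟩
  have hβ : minpoly F (aeval α f) = minpoly F β :=
    minpoly.algebraMap_eq (algebraMap F⟮α⟯ E).injective β
  have hdvd : (minpoly F β).natDegree ∣ (minpoly F α).natDegree :=
    adjoin.finrank hα ▸ minpoly.degree_dvd (IsIntegral.of_finite F β)
  have hne : (minpoly F (aeval α f)).natDegree ≠ 1 := by
    rw [Ne, minpoly.natDegree_eq_one_iff]
    rintro ⟨q, hq⟩
    have hroot : aeval α (f - C q) = 0 := by simp [hq]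
    have hne0 : f - C q ≠ 0 := ne_zero_of_natDegree_gt (n := 0) (by rwa [natDegree_sub_C])
    have hle := natDegree_le_natDegree (minpoly.degree_le_of_ne_zero F α hne0 hroot)
    rw [natDegree_sub_C] at hle
    omega
  rw [hβ] at hne ⊢
  exact (hp.eq_one_or_self_of_dvd _ hdvd).resolve_left hne

end

theorem IsConstructible.exists_finrank_two_pow {a : ℝ} (ha : IsConstructible a)
    {K : IntermediateField ℚ ℝ} (hK : ∃ k, finrank ℚ K = 2 ^ k) :
    ∃ K' : IntermediateField ℚ ℝ, K ≤ K' ∧ a ∈ K' ∧ ∃ k', finrank ℚ K' = 2 ^ k' := by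
  induction ha generalizing K with
  | rat q => exact ⟨K, le_rfl, by simp, hK⟩
  | add _ _ iha ihb =>
    obtain ⟨K₁, hK₁, ha, hK₁'⟩ := iha hK
    obtain ⟨K₂, hK₂, hb, hK₂'⟩ := ihb hK₁'
    exact ⟨K₂, hK₁.trans hK₂, add_mem (hK₂ ha) hb, hK₂'⟩
  | neg _ iha =>
    obtain ⟨K₁, hK₁, ha, hK₁'⟩ := iha hK
    exact ⟨K₁, hK₁, neg_mem ha, hK₁'⟩
  | mul _ _ iha ihb =>
    obtain ⟨K₁, hK₁, ha, hK₁'⟩ := iha hK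
    obtain ⟨K₂, hK₂, hb, hK₂'⟩ := ihb hK₁'
    exact ⟨K₂, hK₁.trans hK₂, mul_mem (hK₂ ha) hb, hK₂'⟩
  | inv _ iha =>
    obtain ⟨K₁, hK₁, ha, hK₁'⟩ := iha hK
    exact ⟨K₁, hK₁, inv_mem ha, hK₁'⟩
  | sqrt h0 _ iha =>
    obtain ⟨K₁, hK₁, ha, k, hk⟩ := iha hK
    obtain ⟨K₂, hK₂, hs, hK₂'⟩ :=
      IntermediateField.exists_finrank_two_pow_of_sq_mem hk (s := √_) (by rwa [sq_sqrt h0])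
    exact ⟨K₂, hK₁.trans hK₂, hs, hK₂'⟩

theorem IsConstructible.exists_natDegree_minpoly_eq_two_pow {a : ℝ} (ha : IsConstructible a) :
    ∃ k, (minpoly ℚ a).natDegree = 2 ^ k := by
  obtain ⟨K, -, haK, k, hk⟩ := ha.exists_finrank_two_pow ⟨0, IntermediateField.finrank_bot⟩
  have : FiniteDimensional ℚ K := Module.finite_of_finrank_pos (by rw [hk]; positivity)
  have hdvd := minpoly.degree_dvd (IsIntegral.of_finite ℚ (⟨a, haK⟩ : K))
  rw [hk] at hdvd
  obtain ⟨j, -, hj⟩ := (Nat.dvd_prime_pow Nat.prime_two).mp hdvd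
  exact ⟨j, by rwa [← minpoly.algebraMap_eq (algebraMap K ℝ).injective] at hj⟩

-- `n (2 cos φ + 1)` is a root when `cos (3φ/2) = 1 - 6/n` (`aeval_deltoidCubic`); shifting
-- `2n cos φ` by `n` is what makes the cubic Eisenstein at `3`.
noncomputable def deltoidCubic (n : ℤ) : ℤ[X] := X ^ 3 - C (3 * n) * X ^ 2 + C (48 * n * (n - 3))

theorem deltoidCubic_monic (n : ℤ) : (deltoidCubic n).Monic := by
  unfold deltoidCubic
  monicity!

theorem deltoidCubic_natDegree (n : ℤ) : (deltoidCubic n).natDegree = 3 := by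
  unfold deltoidCubic
  compute_degree!

theorem deltoidCubic_isEisensteinAt {n : ℤ} (hn : ¬ 3 ∣ n) :
    (deltoidCubic n).IsEisensteinAt (Ideal.span {3}) where
  leading := by
    rw [(deltoidCubic_monic n).leadingCoeff, Ideal.mem_span_singleton]
    decide
  mem {i} hi := by
    rw [deltoidCubic_natDegree] at hi
    rw [Ideal.mem_span_singleton]
    interval_cases i <;>
      simp only [deltoidCubic, coeff_add, coeff_sub, coeff_C_mul, coeff_X_pow, coeff_C] <;> norm_num
    · exact ⟨16 * n * (n - 3), by ring⟩
  notMem := by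
    have h0 : (deltoidCubic n).coeff 0 = 48 * n * (n - 3) := by simp [deltoidCubic, coeff_X_pow]
    rw [h0, Ideal.span_singleton_pow, Ideal.mem_span_singleton]
    rintro ⟨k, hk⟩
    have h16 : (3 : ℤ) ∣ 16 * (n * n) := ⟨k + 16 * n, by linarith⟩
    rcases Int.prime_three.dvd_or_dvd h16 with h | h
    · norm_num at h
    · exact (Int.prime_three.dvd_or_dvd h).elim hn hn

theorem irreducible_map_deltoidCubic {n : ℤ} (hn : ¬ 3 ∣ n) :
    Irreducible ((deltoidCubic n).map (Int.castRingHom ℚ)) :=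
  (IsPrimitive.Int.irreducible_iff_irreducible_map_cast (deltoidCubic_monic n).isPrimitive).mp <|
    (deltoidCubic_isEisensteinAt hn).irreducible
      ((Ideal.span_singleton_prime (by norm_num)).mpr Int.prime_three)
      (deltoidCubic_monic n).isPrimitive (by rw [deltoidCubic_natDegree]; norm_num)

section Deltoid

variable {γ : ℝ → EuclideanSpace ℝ (Fin 2)}

theorem hasDerivAt_deltoid
    (hγ : ∀ φ : ℝ, γ φ = ![2 * cos φ + cos (2 * φ), 2 * sin φ - sin (2 * φ)]) (ψ : ℝ) :
    HasDerivAt γ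
      (WithLp.toLp 2 ![-2 * sin ψ - 2 * sin (2 * ψ), 2 * cos ψ - 2 * cos (2 * ψ)]) ψ := by
  have hγ' : γ = fun t ↦ WithLp.toLp 2 ![2 * cos t + cos (2 * t), 2 * sin t - sin (2 * t)] := by
    funext t
    rw [← hγ t]
  have hx : HasDerivAt (fun t ↦ 2 * cos t + cos (2 * t)) (-2 * sin ψ - 2 * sin (2 * ψ)) ψ :=
    ((hasDerivAt_cos ψ).const_mul 2).add ((hasDerivAt_cos (2 * ψ)).comp ψ
      ((hasDerivAt_id ψ).const_mul 2)) |>.congr_deriv (by ring)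
  have hy : HasDerivAt (fun t ↦ 2 * sin t - sin (2 * t)) (2 * cos ψ - 2 * cos (2 * ψ)) ψ :=
    ((hasDerivAt_sin ψ).const_mul 2).sub ((hasDerivAt_sin (2 * ψ)).comp ψ
      ((hasDerivAt_id ψ).const_mul 2)) |>.congr_deriv (by ring)
  have hpi : HasDerivAt (fun t ↦ ![2 * cos t + cos (2 * t), 2 * sin t - sin (2 * t)])
      ![-2 * sin ψ - 2 * sin (2 * ψ), 2 * cos ψ - 2 * cos (2 * ψ)] ψ := by
    rw [hasDerivAt_pi]
    intro i
    fin_cases i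
    exacts [hx, hy]
  rw [hγ']
  exact (PiLp.hasFDerivAt_toLp 2 _).comp_hasDerivAt ψ hpi

theorem norm_deriv_deltoid
    (hγ : ∀ φ : ℝ, γ φ = ![2 * cos φ + cos (2 * φ), 2 * sin φ - sin (2 * φ)]) (ψ : ℝ) :
    ‖deriv γ ψ‖ = 4 * |sin (3 * ψ / 2)| := by
  have hsq : (-2 * sin ψ - 2 * sin (2 * ψ)) ^ 2 + (2 * cos ψ - 2 * cos (2 * ψ)) ^ 2
      = (4 * sin (3 * ψ / 2)) ^ 2 := by
    have h3 : cos (3 * ψ) = cos ψ * cos (2 * ψ) - sin ψ * sin (2 * ψ) := by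
      rw [← cos_add]; ring_nf
    have hhalf : cos (3 * ψ) = 1 - 2 * sin (3 * ψ / 2) ^ 2 := by
      have h := cos_two_mul (3 * ψ / 2)
      rw [show 2 * (3 * ψ / 2) = 3 * ψ by ring, cos_sq'] at h
      linarith
    linear_combination 4 * sin_sq_add_cos_sq ψ + 4 * sin_sq_add_cos_sq (2 * ψ) + 8 * h3 - 8 * hhalf
  rw [(hasDerivAt_deltoid hγ ψ).deriv, EuclideanSpace.norm_eq, Fin.sum_univ_two]
  simp only [Matrix.cons_val_zero, Matrix.cons_val_one, Real.norm_eq_abs, sq_abs]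
  rw [hsq, sqrt_sq_eq_abs, abs_mul, abs_of_pos four_pos]

theorem integral_norm_deriv_deltoid
    (hγ : ∀ φ : ℝ, γ φ = ![2 * cos φ + cos (2 * φ), 2 * sin φ - sin (2 * φ)]) {φ : ℝ}
    (hφ₀ : 0 ≤ φ) (hφ₁ : φ ≤ 2 * π / 3) :
    ∫ ψ in (0 : ℝ)..φ, ‖deriv γ ψ‖ = 8 / 3 * (1 - cos (3 * φ / 2)) := by
  have hnorm : Set.EqOn (fun ψ ↦ ‖deriv γ ψ‖) (fun ψ ↦ 4 * sin (3 * ψ / 2)) (Set.uIcc 0 φ) := by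
    intro ψ hψ
    rw [Set.uIcc_of_le hφ₀] at hψ
    simp only
    rw [norm_deriv_deltoid hγ, abs_of_nonneg (sin_nonneg_of_nonneg_of_le_pi (by linarith [hψ.1])
      (by linarith [hψ.2]))]
  have hF : ∀ t, HasDerivAt (fun s ↦ -(8 / 3) * cos (3 * s / 2)) (4 * sin (3 * t / 2)) t :=
    fun t ↦ (((hasDerivAt_cos _).comp t (((hasDerivAt_id t).const_mul 3).div_const 2)).const_mul
      _).congr_deriv (by simp; ring)
  rw [intervalIntegral.integral_congr hnorm, intervalIntegral.integral_eq_sub_of_hasDerivAt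
    (fun t _ ↦ hF t) (by apply Continuous.intervalIntegrable; fun_prop)]
  simp only [mul_zero, zero_div, cos_zero]
  ring

end Deltoid

theorem isIntegral_and_natDegree_minpoly_of_aeval_deltoidCubic {K : Type*} [Field K] [CharZero K]
    {n : ℤ} (hn : ¬ 3 ∣ n) {z : K} (hz : aeval z (deltoidCubic n) = 0) :
    IsIntegral ℚ z ∧ (minpoly ℚ z).natDegree = 3 := by
  have hmonic := (deltoidCubic_monic n).map (Int.castRingHom ℚ)
  have hroot : aeval z ((deltoidCubic n).map (Int.castRingHom ℚ)) = 0 := by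
    rwa [← algebraMap_int_eq, aeval_map_algebraMap]
  refine ⟨⟨_, hmonic, by rwa [← aeval_def]⟩, ?_⟩
  rw [← minpoly.eq_of_irreducible_of_monic (irreducible_map_deltoidCubic hn) hroot hmonic,
    (deltoidCubic_monic n).natDegree_map, deltoidCubic_natDegree]

theorem aeval_deltoidCubic {n : ℕ} (hn : n ≠ 0) {θ : ℝ} (h : cos (3 * θ / 2) = 1 - 6 / n) :
    aeval ((n : ℝ) * (2 * cos θ + 1)) (deltoidCubic n) = 0 := by
  have hcos : cos (3 * θ) = 2 * (1 - 6 / n) ^ 2 - 1 := by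
    rw [← h, ← cos_two_mul]
    ring_nf
  have key : (n : ℝ) ^ 2 * (4 * cos θ ^ 3 - 3 * cos θ) = 2 * (n - 6) ^ 2 - n ^ 2 := by
    rw [← cos_three_mul, hcos]
    field_simp
  simp only [deltoidCubic, map_add, map_sub, map_mul, map_pow, aeval_X, map_ofNat, eq_intCast,
    map_intCast]
  push_cast
  linear_combination 2 * (n : ℝ) * key

theorem natDegree_minpoly_two_mul_cos_add_cos_two_mul {n : ℕ} (hn : ¬ 3 ∣ n) {θ : ℝ}
    (h : cos (3 * θ / 2) = 1 - 6 / n) :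
    (minpoly ℚ (2 * cos θ + cos (2 * θ))).natDegree = 3 := by
  have hn₀ : n ≠ 0 := by
    rintro rfl
    exact hn (dvd_zero 3)
  obtain ⟨hz, hz3⟩ := isIntegral_and_natDegree_minpoly_of_aeval_deltoidCubic
    (by exact_mod_cast hn) (aeval_deltoidCubic hn₀ h)
  let f : ℚ[X] := C (1 / (2 * (n : ℚ) ^ 2)) * X ^ 2 - C (3 / 2)
  have hf : f.natDegree = 2 := by
    unfold f
    compute_degree!
  have hxf : 2 * cos θ + cos (2 * θ) = aeval ((n : ℝ) * (2 * cos θ + 1)) f := by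
    simp only [f, map_sub, map_mul, map_pow, aeval_X, aeval_C, eq_ratCast]
    push_cast
    rw [cos_two_mul]
    field_simp
    ring
  rw [hxf, natDegree_minpoly_aeval_eq_of_prime hz (hz3 ▸ Nat.prime_three) (by omega) (by omega),
    hz3]

theorem tricuspoid_division_point_x_not_constructible_general
    (n : ℕ) (h3 : Nat.gcd n 3 = 1)
    (γ : ℝ → EuclideanSpace ℝ (Fin 2))
    (hγ : ∀ φ : ℝ, γ φ =
      ![2 * Real.cos φ + Real.cos (2 * φ),
        2 * Real.sin φ - Real.sin (2 * φ)])
    (φ : ℝ) (hφ0 : 0 ≤ φ) (hφ1 : φ ≤ 2 * π / 3)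
    (hs : (∫ ψ in (0 : ℝ)..φ, ‖deriv γ ψ‖) = 16 / (n : ℝ))
    (x : ℝ) (hx : x = 2 * Real.cos φ + Real.cos (2 * φ)) :
    IsAlgebraic ℚ x ∧ (minpoly ℚ x).natDegree = 3 ∧
      (¬ ∃ k : ℕ, (minpoly ℚ x).natDegree = 2 ^ k) ∧
      ¬ IsConstructible x := by
  have hn3 : ¬ 3 ∣ n := (Nat.Prime.coprime_iff_not_dvd Nat.prime_three).mp (Nat.coprime_comm.mp h3)
  have hcos : cos (3 * φ / 2) = 1 - 6 / n := by
    rw [integral_norm_deriv_deltoid hγ hφ0 hφ1] at hs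
    linear_combination (-3 / 8) * hs
  have hdeg : (minpoly ℚ x).natDegree = 3 :=
    hx ▸ natDegree_minpoly_two_mul_cos_add_cos_two_mul hn3 hcos
  have hpow : ¬ ∃ k : ℕ, (minpoly ℚ x).natDegree = 2 ^ k := by
    rintro ⟨k, hk⟩
    rw [hdeg] at hk
    have h32 := Nat.prime_three.dvd_of_dvd_pow (dvd_of_eq hk)
    norm_num at h32
  have hint : IsIntegral ℚ x := minpoly.ne_zero_iff.mp fun h ↦ by simp [h] at hdeg
  exact ⟨hint.isAlgebraic, hdeg, hpow, fun hc ↦ hpow hc.exists_natDegree_minpoly_eq_two_pow⟩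

/-- For `n > 2` with `gcd(n,3) = 1`, the `x`-coordinate of the first
`n`-division point of the tricuspoid has degree `3` over `ℚ`, which is not a
power of `2`, hence it is not a constructible number. -/
theorem tricuspoid_division_point_x_not_constructible
    (n : ℕ) (hn : 2 < n) (h3 : Nat.gcd n 3 = 1)
    (γ : ℝ → EuclideanSpace ℝ (Fin 2))
    (hγ : ∀ φ : ℝ, γ φ =
      ![2 * Real.cos φ + Real.cos (2 * φ),
        2 * Real.sin φ - Real.sin (2 * φ)])
    (φ : ℝ) (hφ0 : 0 ≤ φ) (hφ1 : φ ≤ 2 * π / 3)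
    (hs : (∫ ψ in (0 : ℝ)..φ, ‖deriv γ ψ‖) = 16 / (n : ℝ))
    (x : ℝ) (hx : x = 2 * Real.cos φ + Real.cos (2 * φ)) :
    IsAlgebraic ℚ x ∧ (minpoly ℚ x).natDegree = 3 ∧
      (¬ ∃ k : ℕ, (minpoly ℚ x).natDegree = 2 ^ k) ∧
      ¬ IsConstructible x :=
  tricuspoid_division_point_x_not_constructible_general n h3 γ hγ φ hφ0 hφ1 hs x hx
end
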